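/- Let G1 and G2 be graphs of maximum degree at most 3, and suppose G1 is 3-critical. If G is a graph of maximum degree at most 3 that is a Hajós join of G1 and G2, then G is 3-critical if and only if G2 is 3-critical. -/

import Mathlib

/-- A proper edge coloring of `G` with `n` colors: edges sharing an endpoint
get distinct colors. -/
def EdgeColorable {V : Type*} (G : SimpleGraph V) (n : ℕ) : Prop :=
  ∃ C : G.edgeSet → Fin n, ∀ e₁ e₂ : G.edgeSet, e₁ ≠ e₂ →
    (∃ v, v ∈ (e₁ : Sym2 V) ∧ v ∈ (e₂ : Sym2 V)) → C e₁ ≠ C e₂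

/-- The chromatic index (edge chromatic number) of `G`. -/
noncomputable def chromIndex {V : Type*} (G : SimpleGraph V) : ℕ :=
  sInf {n | EdgeColorable G n}

/-- The degree of a vertex. -/
noncomputable def deg {V : Type*} (G : SimpleGraph V) (v : V) : ℕ :=
  (G.neighborSet v).ncard

/-- A graph with maximum degree `k` is `k`-critical if `χ'(G) = k + 1` and
`χ'(G - e) = k` for every edge `e`. -/
def IsCritical {V : Type*} (k : ℕ) (G : SimpleGraph V) : Prop :=
  (∀ v, deg G v ≤ k) ∧ (∃ v, deg G v = k) ∧
  chromIndex G = k + 1 ∧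
  ∀ e ∈ G.edgeSet, chromIndex (G.deleteEdges {e}) = k

/-- The Hajós join of `G₁` and `G₂` along edges `v₁v₂` and `v₃v₄`: delete the
two edges, identify `v₁` with `v₃`, and add the edge `v₂v₄`. -/
def hajosJoin {V₁ V₂ : Type*} (G₁ : SimpleGraph V₁) (G₂ : SimpleGraph V₂)
    (v₁ v₂ : V₁) (v₃ v₄ : V₂) :
    SimpleGraph (V₁ ⊕ {x : V₂ // x ≠ v₃}) :=
  SimpleGraph.fromRel fun a b =>
    match a, b with
    | Sum.inl x, Sum.inl y => G₁.Adj x y ∧ s(x, y) ≠ s(v₁, v₂)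
    | Sum.inl x, Sum.inr y => (x = v₁ ∧ G₂.Adj v₃ y.1 ∧ y.1 ≠ v₄) ∨ (x = v₂ ∧ y.1 = v₄)
    | Sum.inr _, Sum.inl _ => False
    | Sum.inr x, Sum.inr y => G₂.Adj x.1 y.1 ∧ s(x.1, y.1) ≠ s(v₃, v₄)

/-- `G` is a Hajós join of `G₁` and `G₂`. -/
def IsHajosJoin {W V₁ V₂ : Type*} (G : SimpleGraph W)
    (G₁ : SimpleGraph V₁) (G₂ : SimpleGraph V₂) : Prop :=
  ∃ (v₁ v₂ : V₁) (v₃ v₄ : V₂), G₁.Adj v₁ v₂ ∧ G₂.Adj v₃ v₄ ∧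
    Nonempty (G ≃g hajosJoin G₁ G₂ v₁ v₂ v₃ v₄)

/-- Vertices of the Petersen graph: 2-element subsets of a 5-element set. -/
abbrev KVert : Type := {s : Finset (Fin 5) // s.card = 2}

/-- The Petersen graph, as the Kneser graph K(5,2). -/
def Petersen : SimpleGraph KVert where
  Adj a b := Disjoint a.1 b.1
  symm := ⟨fun a b (h : Disjoint a.1 b.1) => h.symm⟩
  loopless := ⟨fun a (h : Disjoint a.1 a.1) => by
    have h2 := a.2
    have h' : (a.1 : Finset (Fin 5)) = ∅ := disjoint_self.mp h
    rw [h'] at h2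
    simp at h2⟩

/-- A fixed vertex of the Petersen graph. -/
def pstarV : KVert := ⟨{0, 1}, by decide⟩

/-- The vertex set of the Petersen graph minus one vertex. -/
abbrev PV : Type := {x : KVert // x ≠ pstarV}

/-- `P*`: the Petersen graph with one vertex deleted. -/
def PStar : SimpleGraph PV where
  Adj a b := Petersen.Adj a.1 b.1
  symm := ⟨fun _ _ h => Petersen.adj_symm h⟩
  loopless := ⟨fun a h => Petersen.irrefl (v := a.1) h⟩

/-!
In a 3-edge-coloring of `G₁ - v₁v₂` every color occurs at `v₁` or at `v₂`, for otherwise `G₁`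
would be 3-edge-colorable; as `v₂` has degree at most 2 there, some color is missing at `v₂` but
present at `v₁`. Hence in a 3-edge-coloring of the Hajós join the color of `v₂v₄` is absent from
the `G₂`-edges at `v₁ = v₃` and at `v₄`, and can be given to `v₃v₄`. Conversely, colorings of the
two sides merge into one of the join after permuting the colors of the `G₂` side, so that the at
most three colors at the identified vertex are distinct and `v₂v₄` gets a color missing at both of
its ends. So the join is 3-edge-colorable iff `G₂` is, and the same two arguments, applied after
deleting an edge of `G₁`, of `G₂`, or the edge `v₂v₄`, show that the join is 3-critical iff `G₂`
is. (For maximum degree 3, 3-criticality only asks that `G` is not 3-edge-colorable while every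
`G - e` is: greedy coloring provides a vertex of degree 3.)
-/

open Function SimpleGraph

lemma Fin.exists_notMem_of_ncard_lt {n : ℕ} {s : Set (Fin n)} (h : s.ncard < n) : ∃ γ, γ ∉ s := by
  by_contra! hs
  simp [Set.eq_univ_of_forall hs] at h

lemma SimpleGraph.deleteEdges_comm {V : Type*} (G : SimpleGraph V) (s t : Set (Sym2 V)) :
    (G.deleteEdges s).deleteEdges t = (G.deleteEdges t).deleteEdges s := by
  rw [deleteEdges_deleteEdges, deleteEdges_deleteEdges, Set.union_comm]

section EdgeColoring

variable {V W α β : Type*} {G H : SimpleGraph V} {n : ℕ}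

def IsEdgeColoring (G : SimpleGraph V) (C : Sym2 V → α) : Prop :=
  ∀ ⦃a b c : V⦄, G.Adj a b → G.Adj a c → b ≠ c → C s(a, b) ≠ C s(a, c)

def colorsAt (G : SimpleGraph V) (C : Sym2 V → α) (v : V) : Set α :=
  (fun b => C s(v, b)) '' G.neighborSet v

lemma colorsAt_comp (f : α → β) (C : Sym2 V → α) (v : V) :
    colorsAt G (f ∘ C) v = f '' colorsAt G C v :=
  (Set.image_image f _ _).symm

lemma ncard_colorsAt_le [Finite V] (C : Sym2 V → α) (v : V) : (colorsAt G C v).ncard ≤ deg G v :=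
  Set.ncard_image_le (Set.toFinite _)

namespace IsEdgeColoring

variable {C : Sym2 V → α}

lemma mono (h : H ≤ G) (hC : IsEdgeColoring G C) : IsEdgeColoring H C :=
  fun _ _ _ hab hac hbc => hC (h hab) (h hac) hbc

lemma comp {f : α → β} (hf : Injective f) (hC : IsEdgeColoring G C) : IsEdgeColoring G (f ∘ C) :=
  fun _ _ _ hab hac hbc h => hC hab hac hbc (hf h)

lemma comp_sym2Map {G' : SimpleGraph W} {f : W → V} (hf : Injective f)
    (hadj : ∀ ⦃x y⦄, G'.Adj x y → G.Adj (f x) (f y)) (hC : IsEdgeColoring G C) :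
    IsEdgeColoring G' (C ∘ Sym2.map f) :=
  fun _ _ _ hab hac hbc => hC (hadj hab) (hadj hac) (hf.ne hbc)

lemma notMem_colorsAt_deleteEdges {a b : V} (hC : IsEdgeColoring G C) (hab : G.Adj a b) :
    C s(a, b) ∉ colorsAt (G.deleteEdges {s(a, b)}) C a := by
  rintro ⟨c, hac, hc⟩
  rw [mem_neighborSet, deleteEdges_adj, Set.mem_singleton_iff] at hac
  exact hC hac.1 hab (fun h => hac.2 (h ▸ rfl)) hc

lemma update [DecidableEq V] {a b : V} {γ : α} (hab : G.Adj a b)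
    (hC : IsEdgeColoring (G.deleteEdges {s(a, b)}) C)
    (ha : γ ∉ colorsAt (G.deleteEdges {s(a, b)}) C a)
    (hb : γ ∉ colorsAt (G.deleteEdges {s(a, b)}) C b) :
    IsEdgeColoring G (update C s(a, b) γ) := by
  have hdel : ∀ {x y}, G.Adj x y → s(x, y) ≠ s(a, b) → (G.deleteEdges {s(a, b)}).Adj x y :=
    fun hxy hne => (deleteEdges_adj).2 ⟨hxy, hne⟩
  intro x y z hxy hxz hyz
  by_cases h1 : s(x, y) = s(a, b) <;> by_cases h2 : s(x, z) = s(a, b)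
  · exact absurd (Sym2.congr_right.mp (h1.trans h2.symm)) hyz
  · rw [update_of_ne h2, h1, update_self]
    rcases Sym2.eq_iff.mp h1 with ⟨rfl, rfl⟩ | ⟨rfl, rfl⟩
    · exact fun h => ha ⟨z, hdel hxz h2, h.symm⟩
    · exact fun h => hb ⟨z, hdel hxz h2, h.symm⟩
  · rw [update_of_ne h1, h2, update_self]
    rcases Sym2.eq_iff.mp h2 with ⟨rfl, rfl⟩ | ⟨rfl, rfl⟩
    · exact fun h => ha ⟨y, hdel hxy h1, h⟩
    · exact fun h => hb ⟨y, hdel hxy h1, h⟩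
  · rw [update_of_ne h1, update_of_ne h2]
    exact hC (hdel hxy h1) (hdel hxz h2) hyz

end IsEdgeColoring

lemma IsEdgeColoring.edgeColorable {C : Sym2 V → Fin n} (hC : IsEdgeColoring G C) :
    EdgeColorable G n := by
  refine ⟨fun e => C e, fun ⟨e₁, he₁⟩ ⟨e₂, he₂⟩ hne ⟨v, hv₁, hv₂⟩ => ?_⟩
  obtain ⟨b, rfl⟩ := Sym2.mem_iff_exists.mp hv₁
  obtain ⟨c, rfl⟩ := Sym2.mem_iff_exists.mp hv₂
  exact hC he₁ he₂ (by rintro rfl; exact hne rfl)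

/-- Off the edge set the coloring takes the junk value `d`. -/
lemma EdgeColorable.exists_isEdgeColoring (h : EdgeColorable G n) (f : Fin n ↪ α) (d : α) :
    ∃ C : Sym2 V → α, IsEdgeColoring G C ∧ ∀ e ∈ G.edgeSet, C e ∈ Set.range f := by
  classical
  obtain ⟨C, hC⟩ := h
  refine ⟨fun e => if he : e ∈ G.edgeSet then f (C ⟨e, he⟩) else d, fun a b c hab hac hbc => ?_,
    fun e he => ⟨C ⟨e, he⟩, by simp [he]⟩⟩
  simp only [dif_pos (show s(a, b) ∈ G.edgeSet from hab),
    dif_pos (show s(a, c) ∈ G.edgeSet from hac), f.injective.ne_iff]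
  exact hC _ _ (fun h => hbc (Sym2.congr_right.mp (congrArg Subtype.val h))) ⟨a, by simp, by simp⟩

lemma EdgeColorable.exists_isEdgeColoring_fin [NeZero n] (h : EdgeColorable G n) :
    ∃ C : Sym2 V → Fin n, IsEdgeColoring G C :=
  (h.exists_isEdgeColoring (.refl _) 0).imp fun _ => And.left

end EdgeColoring

section EdgeColorable

variable {V W : Type*} {G H : SimpleGraph V} {n m : ℕ}

lemma EdgeColorable.mono (h : EdgeColorable G n) (hnm : n ≤ m) : EdgeColorable G m := by
  obtain ⟨C, hC⟩ := h
  exact ⟨Fin.castLE hnm ∘ C, fun e₁ e₂ hne hv h => hC e₁ e₂ hne hv (Fin.castLE_injective hnm h)⟩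

lemma EdgeColorable.of_isContained {G' : SimpleGraph W} (hG : G ⊑ G') (h : EdgeColorable G' n) :
    EdgeColorable G n := by
  obtain ⟨f⟩ := hG
  obtain ⟨C, hC⟩ := h
  refine ⟨C ∘ f.mapEdgeSet, fun e₁ e₂ hne ⟨v, hv₁, hv₂⟩ => hC _ _ (f.mapEdgeSet.injective.ne hne)
    ⟨f v, Sym2.mem_map.2 ⟨v, hv₁, rfl⟩, Sym2.mem_map.2 ⟨v, hv₂, rfl⟩⟩⟩

lemma EdgeColorable.of_deleteEdges {a b : V} (hab : G.Adj a b)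
    (h : EdgeColorable (G.deleteEdges {s(a, b)}) n) : EdgeColorable G (n + 1) := by
  classical
  obtain ⟨C, hC, hrange⟩ := h.exists_isEdgeColoring Fin.castSuccEmb (Fin.last n)
  have hlast : ∀ v, Fin.last n ∉ colorsAt (G.deleteEdges {s(a, b)}) C v := by
    rintro v ⟨c, hc, hlast⟩
    obtain ⟨γ, hγ⟩ := hrange s(v, c) hc
    exact Fin.castSucc_ne_last γ (hγ.trans hlast)
  exact (hC.update hab (hlast a) (hlast b)).edgeColorable

lemma IsEdgeColoring.mem_colorsAt_or_mem_colorsAt {a b : V} (hab : G.Adj a b)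
    (hG : ¬ EdgeColorable G n) {C : Sym2 V → Fin n}
    (hC : IsEdgeColoring (G.deleteEdges {s(a, b)}) C) (γ : Fin n) :
    γ ∈ colorsAt (G.deleteEdges {s(a, b)}) C a ∨ γ ∈ colorsAt (G.deleteEdges {s(a, b)}) C b := by
  classical
  by_contra! h
  exact hG (hC.update hab h.1 h.2).edgeColorable

lemma chromIndex_eq_succ_iff {k : ℕ} :
    chromIndex G = k + 1 ↔ EdgeColorable G (k + 1) ∧ ¬ EdgeColorable G k := by
  constructor
  · intro h
    have hne : {n | EdgeColorable G n}.Nonempty := Nat.nonempty_of_pos_sInf (by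
      rw [← chromIndex, h]; exact k.succ_pos)
    refine ⟨h ▸ Nat.sInf_mem hne, fun hk => ?_⟩
    have : chromIndex G ≤ k := Nat.sInf_le hk
    omega
  · rintro ⟨hk, hk'⟩
    refine le_antisymm (Nat.sInf_le hk) (Nat.succ_le_of_lt (lt_of_not_ge fun hle => hk' ?_))
    exact (Nat.sInf_mem (s := {n | EdgeColorable G n}) ⟨_, hk⟩).mono hle

end EdgeColorable

section Degree

variable {V : Type*} [Finite V] {G H : SimpleGraph V}

lemma deg_mono (h : H ≤ G) (v : V) : deg H v ≤ deg G v :=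
  Set.ncard_le_ncard (fun _ hb => h hb) (Set.toFinite _)

lemma deg_deleteEdges_lt_left {a b : V} (hab : G.Adj a b) :
    deg (G.deleteEdges {s(a, b)}) a < deg G a :=
  Set.ncard_lt_ncard ⟨fun _ hc => (deleteEdges_adj.1 hc).1,
    fun hsub => by simpa using hsub (show b ∈ G.neighborSet a from hab)⟩ (Set.toFinite _)

lemma deg_deleteEdges_lt_right {a b : V} (hab : G.Adj a b) :
    deg (G.deleteEdges {s(a, b)}) b < deg G b := by
  rw [Sym2.eq_swap]
  exact deg_deleteEdges_lt_left hab.symm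

/-- Greedy edge coloring: an edge meets at most `2k` others. -/
lemma edgeColorable_of_forall_deg_le (k : ℕ) (hdeg : ∀ v, deg G v ≤ k + 1) :
    EdgeColorable G (2 * k + 1) := by
  classical
  induction G using WellFoundedLT.induction with
  | ind G ih =>
  rcases G.edgeSet.eq_empty_or_nonempty with hE | ⟨e, he⟩
  · exact ⟨fun _ => 0, fun e => absurd e.2 (by simp [hE])⟩
  induction e using Sym2.ind with
  | h a b =>
  have hab : G.Adj a b := he
  set G' := G.deleteEdges {s(a, b)}
  have hlt : G' < G := (deleteEdges_le _).lt_of_ne fun h => by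
    simpa [G'] using congrArg (fun G => G.Adj a b) h |>.mpr hab
  obtain ⟨C, hC⟩ := (ih G' hlt fun v =>
    (deg_mono (deleteEdges_le _) v).trans (hdeg v)).exists_isEdgeColoring_fin
  have hA := (ncard_colorsAt_le (G := G') C a).trans_lt
    ((deg_deleteEdges_lt_left hab).trans_le (hdeg a))
  have hB := (ncard_colorsAt_le (G := G') C b).trans_lt
    ((deg_deleteEdges_lt_right hab).trans_le (hdeg b))
  obtain ⟨γ, hγ⟩ := Fin.exists_notMem_of_ncard_lt
    ((Set.ncard_union_le (colorsAt G' C a) (colorsAt G' C b)).trans_lt (by omega))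
  exact (hC.update hab (fun h => hγ (.inl h)) (fun h => hγ (.inr h))).edgeColorable

end Degree

section Critical

variable {V : Type*} {G : SimpleGraph V} {k : ℕ}

lemma IsCritical.not_edgeColorable (h : IsCritical k G) : ¬ EdgeColorable G k :=
  (chromIndex_eq_succ_iff.1 h.2.2.1).2

lemma IsCritical.edgeColorable_deleteEdges (h : IsCritical (k + 1) G) {e : Sym2 V}
    (he : e ∈ G.edgeSet) : EdgeColorable (G.deleteEdges {e}) (k + 1) :=
  (chromIndex_eq_succ_iff.1 (h.2.2.2 e he)).1

lemma isCritical_three_iff [Finite V] (hdeg : ∀ v, deg G v ≤ 3) :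
    IsCritical 3 G ↔
      ¬ EdgeColorable G 3 ∧ ∀ e ∈ G.edgeSet, EdgeColorable (G.deleteEdges {e}) 3 := by
  refine ⟨fun h => ⟨h.not_edgeColorable, fun e => h.edgeColorable_deleteEdges⟩, ?_⟩
  rintro ⟨hG, hdel⟩
  obtain ⟨v, hv⟩ : ∃ v, deg G v = 3 := by
    by_contra! h
    exact hG (edgeColorable_of_forall_deg_le 1 fun v => by have := hdeg v; have := h v; omega)
  obtain ⟨w, hw⟩ : (G.neighborSet v).Nonempty :=
    Set.nonempty_of_ncard_ne_zero (by rw [← deg, hv]; decide)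
  refine ⟨hdeg, ⟨v, hv⟩, chromIndex_eq_succ_iff.2 ⟨(hdel _ hw).of_deleteEdges hw, hG⟩,
    fun e he => chromIndex_eq_succ_iff.2 ⟨hdel e he, fun h2 => hG ?_⟩⟩
  induction e using Sym2.ind with
  | h a b => exact h2.of_deleteEdges he

end Critical

section MissingColors

variable {V : Type*} {G : SimpleGraph V} {a b : V}

lemma EdgeColorable.exists_missing_deleteEdges (hab : G.Adj a b) (hG : EdgeColorable G 3) :
    ∃ C : Sym2 V → Fin 3, IsEdgeColoring (G.deleteEdges {s(a, b)}) C ∧ ∃ α,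
      α ∉ colorsAt (G.deleteEdges {s(a, b)}) C a ∧ α ∉ colorsAt (G.deleteEdges {s(a, b)}) C b := by
  obtain ⟨C, hC⟩ := hG.exists_isEdgeColoring_fin
  refine ⟨C, hC.mono (deleteEdges_le _), C s(a, b), hC.notMem_colorsAt_deleteEdges hab, ?_⟩
  rw [Sym2.eq_swap]
  exact hC.notMem_colorsAt_deleteEdges hab.symm

lemma exists_missing_of_not_edgeColorable [Finite V] (hab : G.Adj a b)
    (hG : ¬ EdgeColorable G 3) (hGab : EdgeColorable (G.deleteEdges {s(a, b)}) 3)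
    (hb : deg G b ≤ 3) :
    ∃ C : Sym2 V → Fin 3, IsEdgeColoring (G.deleteEdges {s(a, b)}) C ∧ ∃ α,
      α ∉ colorsAt (G.deleteEdges {s(a, b)}) C b ∧ α ∈ colorsAt (G.deleteEdges {s(a, b)}) C a := by
  obtain ⟨C, hC⟩ := hGab.exists_isEdgeColoring_fin
  obtain ⟨α, hα⟩ := Fin.exists_notMem_of_ncard_lt
    ((ncard_colorsAt_le C b).trans_lt ((deg_deleteEdges_lt_right hab).trans_le hb))
  exact ⟨C, hC, α, hα, (hC.mem_colorsAt_or_mem_colorsAt hab hG α).resolve_right hα⟩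

end MissingColors

namespace SimpleGraph.Iso

variable {V W : Type*} {G : SimpleGraph V} {H : SimpleGraph W}

lemma deg_eq (φ : G ≃g H) (v : V) : deg H (φ v) = deg G v := by
  rw [deg, deg, ← φ.image_neighborSet, Set.ncard_image_of_injective _ φ.injective]

lemma edgeColorable_iff (φ : G ≃g H) {n : ℕ} : EdgeColorable G n ↔ EdgeColorable H n :=
  ⟨fun h => h.of_isContained ⟨φ.symm.toCopy⟩, fun h => h.of_isContained ⟨φ.toCopy⟩⟩

lemma chromIndex_eq (φ : G ≃g H) : chromIndex G = chromIndex H := by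
  simp only [chromIndex, φ.edgeColorable_iff]

def deleteEdge (φ : G ≃g H) (e : Sym2 V) : G.deleteEdges {e} ≃g H.deleteEdges {e.map φ} where
  toEquiv := φ.toEquiv
  map_rel_iff' {a b} := by
    change (H.deleteEdges _).Adj (φ a) (φ b) ↔ _
    rw [deleteEdges_adj, deleteEdges_adj, φ.map_adj_iff, Set.mem_singleton_iff,
      Set.mem_singleton_iff, ← Sym2.map_mk, (Sym2.map.injective φ.injective).eq_iff]

lemma isCritical (φ : G ≃g H) {k : ℕ} (h : IsCritical k G) : IsCritical k H := by
  obtain ⟨hdeg, ⟨v, hv⟩, hχ, hdel⟩ := h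
  refine ⟨fun w => (φ.symm.deg_eq w).symm ▸ hdeg _, ⟨φ v, (φ.deg_eq v).trans hv⟩,
    φ.chromIndex_eq ▸ hχ, fun e he => ?_⟩
  rw [(φ.symm.deleteEdge e).chromIndex_eq]
  exact hdel _ (φ.symm.map_mem_edgeSet_iff.2 he)

end SimpleGraph.Iso

section Glue

open Sum

variable {V₁ V₂ : Type*}

/-- `glue HL HR v₁ v₂ v₃ v₄ p` identifies `v₁ ∈ V₁` with `v₃ ∈ V₂` and, when `p` holds, adds the
edge `v₂v₄`. The Hajós join is the case `HL = G₁ - v₁v₂`, `HR = G₂ - v₃v₄`, `p = True`. -/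
def glue (HL : SimpleGraph V₁) (HR : SimpleGraph V₂) (v₁ v₂ : V₁) (v₃ v₄ : V₂) (p : Prop) :
    SimpleGraph (V₁ ⊕ {x : V₂ // x ≠ v₃}) :=
  SimpleGraph.fromRel fun a b =>
    match a, b with
    | inl x, inl y => HL.Adj x y
    | inl x, inr y => (x = v₁ ∧ HR.Adj v₃ y.1) ∨ (p ∧ x = v₂ ∧ y.1 = v₄)
    | inr _, inl _ => False
    | inr x, inr y => HR.Adj x.1 y.1

open Classical in
noncomputable def glueRight (v₁ : V₁) (v₃ : V₂) (x : V₂) : V₁ ⊕ {x : V₂ // x ≠ v₃} :=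
  if h : x = v₃ then inl v₁ else inr ⟨x, h⟩

variable {HL : SimpleGraph V₁} {HR : SimpleGraph V₂} {v₁ v₂ : V₁} {v₃ v₄ : V₂} {p : Prop}

@[simp] lemma glue_adj_inl_inl {x y : V₁} :
    (glue HL HR v₁ v₂ v₃ v₄ p).Adj (inl x) (inl y) ↔ HL.Adj x y := by
  simp only [glue, fromRel_adj, ne_eq, inl.injEq, HL.adj_comm y x, or_self]
  exact ⟨And.right, fun h => ⟨h.ne, h⟩⟩

@[simp] lemma glue_adj_inl_inr {x : V₁} {y : {z : V₂ // z ≠ v₃}} :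
    (glue HL HR v₁ v₂ v₃ v₄ p).Adj (inl x) (inr y) ↔
      (x = v₁ ∧ HR.Adj v₃ y.1) ∨ (p ∧ x = v₂ ∧ y.1 = v₄) := by
  simp [glue]

@[simp] lemma glue_adj_inr_inl {x : V₁} {y : {z : V₂ // z ≠ v₃}} :
    (glue HL HR v₁ v₂ v₃ v₄ p).Adj (inr y) (inl x) ↔
      (x = v₁ ∧ HR.Adj v₃ y.1) ∨ (p ∧ x = v₂ ∧ y.1 = v₄) := by
  simp [glue]

@[simp] lemma glue_adj_inr_inr {x y : {z : V₂ // z ≠ v₃}} :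
    (glue HL HR v₁ v₂ v₃ v₄ p).Adj (inr x) (inr y) ↔ HR.Adj x.1 y.1 := by
  simp only [glue, fromRel_adj, ne_eq, inr.injEq, HR.adj_comm y.1 x.1, or_self]
  exact ⟨And.right, fun h => ⟨fun hxy => h.ne (congrArg Subtype.val hxy), h⟩⟩

@[simp] lemma glueRight_self : glueRight v₁ v₃ v₃ = inl v₁ := dif_pos rfl

lemma glueRight_of_ne {x : V₂} (h : x ≠ v₃) : glueRight v₁ v₃ x = inr ⟨x, h⟩ := dif_neg h

lemma glueRight_ne_inl {x : V₂} {v : V₁} (hv : v ≠ v₁) : glueRight v₁ v₃ x ≠ inl v := by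
  unfold glueRight
  split_ifs <;> simp [hv.symm]

lemma glueRight_injective : Function.Injective (glueRight v₁ v₃) := by
  intro x y h
  by_cases hx : x = v₃ <;> by_cases hy : y = v₃ <;>
    simp_all [glueRight_of_ne]

lemma glue_deleteEdges_map_inl (f : Sym2 V₁) :
    (glue HL HR v₁ v₂ v₃ v₄ p).deleteEdges {f.map inl} =
      glue (HL.deleteEdges {f}) HR v₁ v₂ v₃ v₄ p := by
  induction f using Sym2.ind with
  | h a b =>
  ext (x | x) (y | y) <;> simp

lemma glue_deleteEdges_map_glueRight (h12 : v₁ ≠ v₂) (f : Sym2 V₂) :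
    (glue HL HR v₁ v₂ v₃ v₄ p).deleteEdges {f.map (glueRight v₁ v₃)} =
      glue HL (HR.deleteEdges {f}) v₁ v₂ v₃ v₄ p := by
  induction f using Sym2.ind with
  | h a b =>
  ext (x | ⟨x, hx⟩) (y | ⟨y, hy⟩) <;> by_cases ha : a = v₃ <;> by_cases hb : b = v₃ <;>
    simp [glueRight_of_ne, *] <;> grind

lemma glue_true_deleteEdges_inl_inr (h12 : v₁ ≠ v₂) (h43 : v₄ ≠ v₃) :
    (glue HL HR v₁ v₂ v₃ v₄ True).deleteEdges {s(inl v₂, inr ⟨v₄, h43⟩)} =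
      glue HL HR v₁ v₂ v₃ v₄ False := by
  ext (x | ⟨x, hx⟩) (y | ⟨y, hy⟩) <;> simp <;> grind

lemma glue_adj_glueRight {x y : V₂} (h : HR.Adj x y) :
    (glue HL HR v₁ v₂ v₃ v₄ p).Adj (glueRight v₁ v₃ x) (glueRight v₁ v₃ y) := by
  by_cases hx : x = v₃ <;> by_cases hy : y = v₃ <;> subst_vars
  · exact absurd h HR.irrefl
  · simp [glueRight_of_ne hy, h]
  · simp [glueRight_of_ne hx, h.symm]
  · simpa [glueRight_of_ne hx, glueRight_of_ne hy] using h

lemma hajosJoin_eq_glue (G₁ : SimpleGraph V₁) (G₂ : SimpleGraph V₂) (v₁ v₂ : V₁) (v₃ v₄ : V₂) :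
    hajosJoin G₁ G₂ v₁ v₂ v₃ v₄ =
      glue (G₁.deleteEdges {s(v₁, v₂)}) (G₂.deleteEdges {s(v₃, v₄)}) v₁ v₂ v₃ v₄ True := by
  ext (x | ⟨x, hx⟩) (y | ⟨y, hy⟩) <;> simp [hajosJoin] <;> grind [adj_symm, Adj.ne]

lemma mem_edgeSet_glue {e : Sym2 (V₁ ⊕ {x : V₂ // x ≠ v₃})}
    (he : e ∈ (glue HL HR v₁ v₂ v₃ v₄ p).edgeSet) :
    (∃ f ∈ HL.edgeSet, e = f.map inl) ∨ (∃ f ∈ HR.edgeSet, e = f.map (glueRight v₁ v₃)) ∨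
      ∃ h43 : v₄ ≠ v₃, p ∧ e = s(inl v₂, inr ⟨v₄, h43⟩) := by
  induction e using Sym2.ind with
  | h a b =>
  rcases a with x | ⟨x, hx⟩ <;> rcases b with y | ⟨y, hy⟩ <;> simp at he
  · exact .inl ⟨s(x, y), he, rfl⟩
  · rcases he with ⟨rfl, hy'⟩ | ⟨hp, rfl, rfl⟩
    · exact .inr (.inl ⟨s(v₃, y), hy', by simp [glueRight_of_ne hy]⟩)
    · exact .inr (.inr ⟨hy, hp, rfl⟩)
  · rcases he with ⟨rfl, hx'⟩ | ⟨hp, rfl, rfl⟩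
    · exact .inr (.inl ⟨s(x, v₃), hx'.symm, by simp [glueRight_of_ne hx]⟩)
    · exact .inr (.inr ⟨hx, hp, Sym2.eq_swap⟩)
  · exact .inr (.inl ⟨s(x, y), he, by simp [glueRight_of_ne hx, glueRight_of_ne hy]⟩)

lemma deg_add_deg_le_deg_glue [Finite V₁] [Finite V₂] :
    deg HL v₁ + deg HR v₃ ≤ deg (glue HL HR v₁ v₂ v₃ v₄ p) (inl v₁) := by
  have hdisj : Disjoint (inl '' HL.neighborSet v₁) (glueRight v₁ v₃ '' HR.neighborSet v₃) := by
    rw [Set.disjoint_left]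
    rintro _ ⟨x, -, rfl⟩ ⟨y, hy, hxy⟩
    simp [glueRight_of_ne (HR.ne_of_adj hy).symm] at hxy
  have hsub : inl '' HL.neighborSet v₁ ∪ glueRight v₁ v₃ '' HR.neighborSet v₃ ⊆
      (glue HL HR v₁ v₂ v₃ v₄ p).neighborSet (inl v₁) := by
    rintro _ (⟨x, hx, rfl⟩ | ⟨y, hy, rfl⟩)
    · simpa using hx
    · simp [glueRight_of_ne (HR.ne_of_adj hy).symm, show HR.Adj v₃ y from hy]
  have := Set.ncard_le_ncard hsub (Set.toFinite _)
  rwa [Set.ncard_union_eq hdisj (Set.toFinite _) (Set.toFinite _),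
    Set.ncard_image_of_injective _ inl_injective,
    Set.ncard_image_of_injective _ glueRight_injective] at this

lemma isContained_glue_right : HR ⊑ glue HL HR v₁ v₂ v₃ v₄ p :=
  ⟨⟨⟨glueRight v₁ v₃, fun h => glue_adj_glueRight h⟩, glueRight_injective⟩⟩

end Glue

lemma Fin.exists_perm_three (A B : Finset (Fin 3)) (α β : Fin 3) (hAB : A.card + B.card ≤ 3)
    (hαβ : α ∈ A ↔ β ∉ B) : ∃ π : Equiv.Perm (Fin 3), π β = α ∧ ∀ b ∈ B, π b ∉ A := by
  revert A B α β
  decide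

lemma Fin.exists_perm_disjoint {A B : Set (Fin 3)} (hAB : A.ncard + B.ncard ≤ 3) {α β : Fin 3}
    (hαβ : α ∈ A ↔ β ∉ B) : ∃ π : Equiv.Perm (Fin 3), π β = α ∧ Disjoint A (π '' B) := by
  classical
  rw [Set.ncard_eq_toFinset_card' A, Set.ncard_eq_toFinset_card' B] at hAB
  obtain ⟨π, hπβ, hπB⟩ := Fin.exists_perm_three _ _ α β hAB (by simpa using hαβ)
  refine ⟨π, hπβ, Set.disjoint_right.2 ?_⟩
  rintro _ ⟨b, hb, rfl⟩
  simpa using hπB b (by simpa using hb)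

section GlueColoring

open Sum

variable {V₁ V₂ α : Type*}

open Classical in
noncomputable def glueColoring (v₁ : V₁) (v₃ : V₂) (cL : Sym2 V₁ → α) (cR : Sym2 V₂ → α)
    (δ : α) : Sym2 (V₁ ⊕ {x : V₂ // x ≠ v₃}) → α :=
  Sym2.lift ⟨fun a b => match a, b with
    | inl x, inl y => cL s(x, y)
    | inl x, inr y | inr y, inl x => if x = v₁ then cR s(v₃, y.1) else δ
    | inr x, inr y => cR s(x.1, y.1), by
    rintro (x | x) (y | y) <;> simp [Sym2.eq_swap]⟩

variable {HL : SimpleGraph V₁} {HR : SimpleGraph V₂} {v₁ v₂ : V₁} {v₃ v₄ : V₂} {p : Prop}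
  {cL : Sym2 V₁ → α} {cR : Sym2 V₂ → α} {δ : α}

lemma isEdgeColoring_glueColoring (h12 : v₁ ≠ v₂) (hcL : IsEdgeColoring HL cL)
    (hcR : IsEdgeColoring HR cR) (hdisj : Disjoint (colorsAt HL cL v₁) (colorsAt HR cR v₃))
    (hδ : p → δ ∉ colorsAt HL cL v₂ ∧ δ ∉ colorsAt HR cR v₄) :
    IsEdgeColoring (glue HL HR v₁ v₂ v₃ v₄ p) (glueColoring v₁ v₃ cL cR δ) := by
  have hLR : ∀ z w, HL.Adj v₁ z → HR.Adj v₃ w → cL s(v₁, z) ≠ cR s(v₃, w) :=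
    fun z w hz hw h => Set.disjoint_left.1 hdisj ⟨z, hz, rfl⟩ ⟨w, hw, h.symm⟩
  have hδL : p → ∀ z, HL.Adj v₂ z → cL s(v₂, z) ≠ δ := fun hp z hz h => (hδ hp).1 ⟨z, hz, h⟩
  have hδR : p → ∀ w, HR.Adj v₄ w → cR s(v₄, w) ≠ δ := fun hp w hw h => (hδ hp).2 ⟨w, hw, h⟩
  rintro (a | ⟨a, ha⟩) (b | ⟨b, hb⟩) (c | ⟨c, hc⟩) hab hac hbc <;>
    simp [glueColoring] at hab hac hbc ⊢
  all_goals grind [IsEdgeColoring, Sym2.eq_swap, adj_symm]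

variable [Finite V₁] [Finite V₂]

lemma edgeColorable_glue (h12 : v₁ ≠ v₂) {cL : Sym2 V₁ → Fin 3} (hcL : IsEdgeColoring HL cL)
    {cR : Sym2 V₂ → Fin 3} (hcR : IsEdgeColoring HR cR)
    (hdeg : deg (glue HL HR v₁ v₂ v₃ v₄ p) (inl v₁) ≤ 3) {γ γ' : Fin 3}
    (hγ : γ ∈ colorsAt HL cL v₁ ↔ γ' ∉ colorsAt HR cR v₃)
    (hmiss : p → γ ∉ colorsAt HL cL v₂ ∧ γ' ∉ colorsAt HR cR v₄) :
    EdgeColorable (glue HL HR v₁ v₂ v₃ v₄ p) 3 := by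
  have hcard : (colorsAt HL cL v₁).ncard + (colorsAt HR cR v₃).ncard ≤ 3 :=
    (add_le_add (ncard_colorsAt_le cL v₁) (ncard_colorsAt_le cR v₃)).trans
      (deg_add_deg_le_deg_glue.trans hdeg)
  obtain ⟨π, hπγ, hdisj⟩ := Fin.exists_perm_disjoint hcard hγ
  refine (isEdgeColoring_glueColoring (δ := γ) h12 hcL (hcR.comp π.injective) ?_ ?_).edgeColorable
  · rwa [colorsAt_comp]
  · refine fun hp => ⟨(hmiss hp).1, ?_⟩
    rw [colorsAt_comp, ← hπγ, π.injective.mem_set_image]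
    exact (hmiss hp).2

end GlueColoring

section HajosJoin

open Sum

variable {V₁ V₂ : Type*} {G₁ H₁ : SimpleGraph V₁} {G₂ H₂ : SimpleGraph V₂} {v₁ v₂ : V₁}
  {v₃ v₄ : V₂}

lemma hajosJoin_deleteEdges_map_inl (f : Sym2 V₁) :
    (hajosJoin G₁ G₂ v₁ v₂ v₃ v₄).deleteEdges {f.map inl} =
      hajosJoin (G₁.deleteEdges {f}) G₂ v₁ v₂ v₃ v₄ := by
  rw [hajosJoin_eq_glue, hajosJoin_eq_glue, glue_deleteEdges_map_inl, deleteEdges_comm]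

lemma hajosJoin_deleteEdges_map_glueRight (h12 : v₁ ≠ v₂) (f : Sym2 V₂) :
    (hajosJoin G₁ G₂ v₁ v₂ v₃ v₄).deleteEdges {f.map (glueRight v₁ v₃)} =
      hajosJoin G₁ (G₂.deleteEdges {f}) v₁ v₂ v₃ v₄ := by
  rw [hajosJoin_eq_glue, hajosJoin_eq_glue, glue_deleteEdges_map_glueRight h12, deleteEdges_comm]

lemma hajosJoin_deleteEdges_inl_inr (h12 : v₁ ≠ v₂) (h43 : v₄ ≠ v₃) :
    (hajosJoin G₁ G₂ v₁ v₂ v₃ v₄).deleteEdges {s(inl v₂, inr ⟨v₄, h43⟩)} =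
      glue (G₁.deleteEdges {s(v₁, v₂)}) (G₂.deleteEdges {s(v₃, v₄)}) v₁ v₂ v₃ v₄ False := by
  rw [hajosJoin_eq_glue, glue_true_deleteEdges_inl_inr h12]

lemma edgeColorable_of_edgeColorable_hajosJoin (h12 : G₁.Adj v₁ v₂) (hG₁ : ¬ EdgeColorable G₁ 3)
    (h34 : H₂.Adj v₃ v₄)
    (h : EdgeColorable (hajosJoin G₁ H₂ v₁ v₂ v₃ v₄) 3) : EdgeColorable H₂ 3 := by
  classical
  rw [hajosJoin_eq_glue] at h
  set K := glue (G₁.deleteEdges {s(v₁, v₂)}) (H₂.deleteEdges {s(v₃, v₄)}) v₁ v₂ v₃ v₄ True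
  obtain ⟨C, hC⟩ := h.exists_isEdgeColoring_fin
  have h24 : K.Adj (inl v₂) (glueRight v₁ v₃ v₄) := by simp [K, glueRight_of_ne h34.ne']
  set γ := C s(inl v₂, glueRight v₁ v₃ v₄)
  have hcL : IsEdgeColoring (G₁.deleteEdges {s(v₁, v₂)}) (C ∘ Sym2.map inl) :=
    hC.comp_sym2Map inl_injective fun _ _ h => by simpa [K] using h
  have hcR : IsEdgeColoring (H₂.deleteEdges {s(v₃, v₄)}) (C ∘ Sym2.map (glueRight v₁ v₃)) :=
    hC.comp_sym2Map glueRight_injective fun _ _ h => glue_adj_glueRight h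
  have hγ₂ : γ ∉ colorsAt (G₁.deleteEdges {s(v₁, v₂)}) (C ∘ Sym2.map inl) v₂ := by
    rintro ⟨z, hz, hzγ⟩
    exact hC (show K.Adj (inl v₂) (inl z) by simpa [K] using hz) h24
      (by simp [glueRight_of_ne h34.ne']) hzγ
  obtain ⟨z, hz, hzγ⟩ := (hcL.mem_colorsAt_or_mem_colorsAt h12 hG₁ γ).resolve_right hγ₂
  have hγ₃ : γ ∉ colorsAt (H₂.deleteEdges {s(v₃, v₄)}) (C ∘ Sym2.map (glueRight v₁ v₃)) v₃ := by
    rintro ⟨w, hw : (H₂.deleteEdges _).Adj v₃ w, hwγ⟩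
    have hKw : K.Adj (glueRight v₁ v₃ v₃) (glueRight v₁ v₃ w) := glue_adj_glueRight hw
    rw [glueRight_self] at hKw
    refine hC (show K.Adj (inl v₁) (inl z) by simpa [K] using hz) hKw ?_ ?_
    · simp [glueRight_of_ne (Adj.ne hw).symm]
    · rw [show C s(inl v₁, inl z) = γ from hzγ]
      simpa using hwγ.symm
  have hγ₄ : γ ∉ colorsAt (H₂.deleteEdges {s(v₃, v₄)}) (C ∘ Sym2.map (glueRight v₁ v₃)) v₄ := by
    rintro ⟨w, hw : (H₂.deleteEdges _).Adj v₄ w, hwγ⟩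
    refine hC (glue_adj_glueRight hw) h24.symm (glueRight_ne_inl h12.ne') ?_
    exact hwγ.trans (congrArg C Sym2.eq_swap)
  exact (hcR.update h34 hγ₃ hγ₄).edgeColorable

lemma edgeColorable_deleteEdges_of_hajosJoin (h12 : G₁.Adj v₁ v₂) (h34 : G₂.Adj v₃ v₄)
    (hG₁ : ¬ EdgeColorable G₁ 3)
    (hJ : ∀ e ∈ (hajosJoin G₁ G₂ v₁ v₂ v₃ v₄).edgeSet,
      EdgeColorable ((hajosJoin G₁ G₂ v₁ v₂ v₃ v₄).deleteEdges {e}) 3) :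
    ∀ e ∈ G₂.edgeSet, EdgeColorable (G₂.deleteEdges {e}) 3 := by
  intro e he
  by_cases he34 : e = s(v₃, v₄)
  · subst he34
    have h24 := hJ s(inl v₂, inr ⟨v₄, h34.ne'⟩) (by simp [hajosJoin_eq_glue])
    rw [hajosJoin_deleteEdges_inl_inr h12.ne] at h24
    exact h24.of_isContained isContained_glue_right
  induction e using Sym2.ind with
  | h a b =>
  have hab : (G₂.deleteEdges {s(v₃, v₄)}).Adj a b := deleteEdges_adj.2 ⟨he, he34⟩
  have h := hJ (s(a, b).map (glueRight v₁ v₃)) (by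
    rw [hajosJoin_eq_glue]
    exact glue_adj_glueRight hab)
  rw [hajosJoin_deleteEdges_map_glueRight h12.ne] at h
  exact edgeColorable_of_edgeColorable_hajosJoin h12 hG₁
    (deleteEdges_adj.2 ⟨h34, fun h => he34 (Set.mem_singleton_iff.1 h).symm⟩) h

variable [Finite V₁] [Finite V₂]

lemma edgeColorable_hajosJoin_of_edgeColorable_right (h12 : G₁.Adj v₁ v₂)
    (hG₁ : ¬ EdgeColorable G₁ 3)
    (hG₁' : EdgeColorable (G₁.deleteEdges {s(v₁, v₂)}) 3) (hv₂ : deg G₁ v₂ ≤ 3)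
    (h34 : H₂.Adj v₃ v₄) (hH₂ : EdgeColorable H₂ 3)
    (hdeg : deg (hajosJoin G₁ H₂ v₁ v₂ v₃ v₄) (inl v₁) ≤ 3) :
    EdgeColorable (hajosJoin G₁ H₂ v₁ v₂ v₃ v₄) 3 := by
  rw [hajosJoin_eq_glue] at hdeg ⊢
  obtain ⟨cL, hcL, α, hα₂, hα₁⟩ := exists_missing_of_not_edgeColorable h12 hG₁ hG₁' hv₂
  obtain ⟨cR, hcR, β, hβ₃, hβ₄⟩ := hH₂.exists_missing_deleteEdges h34
  exact edgeColorable_glue h12.ne hcL hcR hdeg (iff_of_true hα₁ hβ₃) fun _ => ⟨hα₂, hβ₄⟩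

lemma edgeColorable_hajosJoin_of_edgeColorable_left (h12 : H₁.Adj v₁ v₂) (hH₁ : EdgeColorable H₁ 3)
    (h34 : G₂.Adj v₃ v₄) (hG₂ : ¬ EdgeColorable G₂ 3)
    (hG₂' : EdgeColorable (G₂.deleteEdges {s(v₃, v₄)}) 3) (hv₄ : deg G₂ v₄ ≤ 3)
    (hdeg : deg (hajosJoin H₁ G₂ v₁ v₂ v₃ v₄) (inl v₁) ≤ 3) :
    EdgeColorable (hajosJoin H₁ G₂ v₁ v₂ v₃ v₄) 3 := by
  rw [hajosJoin_eq_glue] at hdeg ⊢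
  obtain ⟨cL, hcL, α, hα₁, hα₂⟩ := hH₁.exists_missing_deleteEdges h12
  obtain ⟨cR, hcR, β, hβ₄, hβ₃⟩ := exists_missing_of_not_edgeColorable h34 hG₂ hG₂' hv₄
  exact edgeColorable_glue h12.ne hcL hcR hdeg (iff_of_false hα₁ (not_not.2 hβ₃))
    fun _ => ⟨hα₂, hβ₄⟩

lemma edgeColorable_glue_false (h12 : G₁.Adj v₁ v₂) (hG₁ : ¬ EdgeColorable G₁ 3)
    (hG₁' : EdgeColorable (G₁.deleteEdges {s(v₁, v₂)}) 3) (hv₂ : deg G₁ v₂ ≤ 3)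
    (h34 : G₂.Adj v₃ v₄) (hG₂' : EdgeColorable (G₂.deleteEdges {s(v₃, v₄)}) 3) (hv₃ : deg G₂ v₃ ≤ 3)
    (hdeg : deg (glue (G₁.deleteEdges {s(v₁, v₂)}) (G₂.deleteEdges {s(v₃, v₄)}) v₁ v₂ v₃ v₄ False)
      (inl v₁) ≤ 3) :
    EdgeColorable
      (glue (G₁.deleteEdges {s(v₁, v₂)}) (G₂.deleteEdges {s(v₃, v₄)}) v₁ v₂ v₃ v₄ False) 3 := by
  obtain ⟨cL, hcL, α, -, hα₁⟩ := exists_missing_of_not_edgeColorable h12 hG₁ hG₁' hv₂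
  obtain ⟨cR, hcR⟩ := hG₂'.exists_isEdgeColoring_fin
  obtain ⟨β, hβ⟩ := Fin.exists_notMem_of_ncard_lt
    ((ncard_colorsAt_le cR v₃).trans_lt ((deg_deleteEdges_lt_left h34).trans_le hv₃))
  exact edgeColorable_glue h12.ne hcL hcR hdeg (iff_of_true hα₁ hβ) False.elim

lemma edgeColorable_hajosJoin_deleteEdges (h12 : G₁.Adj v₁ v₂) (h34 : G₂.Adj v₃ v₄)
    (h₁ : IsCritical 3 G₁) (h₂ : IsCritical 3 G₂)
    (hu : deg (hajosJoin G₁ G₂ v₁ v₂ v₃ v₄) (inl v₁) ≤ 3) :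
    ∀ e ∈ (hajosJoin G₁ G₂ v₁ v₂ v₃ v₄).edgeSet,
      EdgeColorable ((hajosJoin G₁ G₂ v₁ v₂ v₃ v₄).deleteEdges {e}) 3 := by
  have hdeg : ∀ e, deg ((hajosJoin G₁ G₂ v₁ v₂ v₃ v₄).deleteEdges {e}) (inl v₁) ≤ 3 :=
    fun e => (deg_mono (deleteEdges_le _) _).trans hu
  intro e he
  rw [hajosJoin_eq_glue] at he
  rcases mem_edgeSet_glue he with ⟨f, hf, rfl⟩ | ⟨f, hf, rfl⟩ | ⟨h43, -, rfl⟩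
  · obtain ⟨hf, hf12⟩ : f ∈ G₁.edgeSet ∧ f ≠ s(v₁, v₂) := by simpa using hf
    have hdeg' := hdeg (f.map inl)
    rw [hajosJoin_deleteEdges_map_inl] at hdeg' ⊢
    exact edgeColorable_hajosJoin_of_edgeColorable_left
      (deleteEdges_adj.2 ⟨h12, fun h => hf12 (Set.mem_singleton_iff.1 h).symm⟩)
      (h₁.edgeColorable_deleteEdges hf) h34 h₂.not_edgeColorable
      (h₂.edgeColorable_deleteEdges h34) (h₂.1 v₄) hdeg'
  · obtain ⟨hf, hf34⟩ : f ∈ G₂.edgeSet ∧ f ≠ s(v₃, v₄) := by simpa using hf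
    have hdeg' := hdeg (f.map (glueRight v₁ v₃))
    rw [hajosJoin_deleteEdges_map_glueRight h12.ne] at hdeg' ⊢
    exact edgeColorable_hajosJoin_of_edgeColorable_right h12 h₁.not_edgeColorable
      (h₁.edgeColorable_deleteEdges h12) (h₁.1 v₂)
      (deleteEdges_adj.2 ⟨h34, fun h => hf34 (Set.mem_singleton_iff.1 h).symm⟩)
      (h₂.edgeColorable_deleteEdges hf) hdeg'
  · have hdeg' := hdeg s(inl v₂, inr ⟨v₄, h43⟩)
    rw [hajosJoin_deleteEdges_inl_inr h12.ne] at hdeg' ⊢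
    exact edgeColorable_glue_false h12 h₁.not_edgeColorable (h₁.edgeColorable_deleteEdges h12)
      (h₁.1 v₂) h34 (h₂.edgeColorable_deleteEdges h34) (h₂.1 v₃) hdeg'

theorem isCritical_hajosJoin_iff (h12 : G₁.Adj v₁ v₂) (h34 : G₂.Adj v₃ v₄)
    (h₁ : IsCritical 3 G₁) (h₂max : ∀ v, deg G₂ v ≤ 3)
    (hJmax : ∀ v, deg (hajosJoin G₁ G₂ v₁ v₂ v₃ v₄) v ≤ 3) :
    IsCritical 3 (hajosJoin G₁ G₂ v₁ v₂ v₃ v₄) ↔ IsCritical 3 G₂ := by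
  have hnot : ¬ EdgeColorable (hajosJoin G₁ G₂ v₁ v₂ v₃ v₄) 3 ↔ ¬ EdgeColorable G₂ 3 :=
    not_congr ⟨edgeColorable_of_edgeColorable_hajosJoin h12 h₁.not_edgeColorable h34,
      fun h => edgeColorable_hajosJoin_of_edgeColorable_right h12 h₁.not_edgeColorable
        (h₁.edgeColorable_deleteEdges h12) (h₁.1 v₂) h34 h (hJmax _)⟩
  rw [isCritical_three_iff hJmax, isCritical_three_iff h₂max, hnot]
  refine and_congr_right fun hG₂ =>
    ⟨edgeColorable_deleteEdges_of_hajosJoin h12 h34 h₁.not_edgeColorable, fun hdel => ?_⟩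
  exact edgeColorable_hajosJoin_deleteEdges h12 h34 h₁
    ((isCritical_three_iff h₂max).2 ⟨hG₂, hdel⟩) (hJmax _)

end HajosJoin

theorem stmt_3_general {V₁ V₂ W : Type} [Fintype V₁] [Fintype V₂]
    (G₁ : SimpleGraph V₁) (G₂ : SimpleGraph V₂) (G : SimpleGraph W)
    (h₂max : ∀ v, deg G₂ v ≤ 3)
    (h₁ : IsCritical 3 G₁)
    (hGmax : ∀ v, deg G v ≤ 3)
    (hJ : IsHajosJoin G G₁ G₂) :
    IsCritical 3 G ↔ IsCritical 3 G₂ := by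
  obtain ⟨v₁, v₂, v₃, v₄, h12, h34, ⟨φ⟩⟩ := hJ
  have hJmax : ∀ v, deg (hajosJoin G₁ G₂ v₁ v₂ v₃ v₄) v ≤ 3 :=
    fun v => (φ.symm.deg_eq v).symm.le.trans (hGmax _)
  rw [← isCritical_hajosJoin_iff h12 h34 h₁ h₂max hJmax]
  exact ⟨φ.isCritical, φ.symm.isCritical⟩

/-- Let `G₁`, `G₂` have maximum degree at most 3, with `G₁`
3-critical.  If `G` has maximum degree at most 3 and is a Hajós join of `G₁`
and `G₂`, then `G` is 3-critical iff `G₂` is 3-critical. -/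
theorem stmt_3 {V₁ V₂ W : Type} [Fintype V₁] [Fintype V₂] [Fintype W]
    (G₁ : SimpleGraph V₁) (G₂ : SimpleGraph V₂) (G : SimpleGraph W)
    (h₁max : ∀ v, deg G₁ v ≤ 3) (h₂max : ∀ v, deg G₂ v ≤ 3)
    (h₁ : IsCritical 3 G₁)
    (hGmax : ∀ v, deg G v ≤ 3)
    (hJ : IsHajosJoin G G₁ G₂) :
    IsCritical 3 G ↔ IsCritical 3 G₂ :=
  stmt_3_general G₁ G₂ G h₂max h₁ hGmax hJ
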